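/- arXiv:1805.07183 — 2 statements merged into one kernel-verified Lean document; each statement's English description precedes it below -/
import Mathlib

section
/- Let L be the covector set of an oriented matroid without loops on a finite set E, let R ∈ T, e ∈ E, and let P be a tope with P_e = −R_e. Let C be a tope with C_e = −R_e and Sep(R,C) ⊊ Sep(R,P), and suppose X ∈ L satisfies [C,P]_R = star(X). Then z(X) := {f ∈ E : X_f = 0} equals Sep(C,P), and X ∈ W_{R,e}(P). Moreover, if C' is another tope with C'_e = −R_e, Sep(R,C') ⊊ Sep(R,P), and [C',P]_R = star(X') for some X' ∈ L, and if C ⪯_R C', then X ≤ X' in the componentwise order on covectors. -/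
/-!
Since `X ≤ C` and `X ≤ P`, the covector `X` vanishes on `Sep(C,P)`. Conversely, if `X_f = 0`,
a tope above `X ∘ (-P)` lies in `star(X) = [C,P]_R` and differs from `P` at `f`; as `Sep(·,P)`
can only shrink going up the interval `[C,P]_R`, this puts `f` in `Sep(C,P)`. Hence `X` is `P`
with the coordinates of `Sep(C,P)` set to zero, which gives membership in `W_{R,e}(P)`, and the
monotonicity follows because `C ⪯_R C'` forces `Sep(C',P) ⊆ Sep(C,P)`.
-/

open Finset

/-- Sign vectors on ground set `E`. -/
abbrev SignVec (E : Type*) := E → SignType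

namespace SignVec

/-- The componentwise partial order on sign vectors generated by `0 < +` and `0 < -`. -/
def le {E : Type*} (X Y : SignVec E) : Prop := ∀ e, X e = 0 ∨ X e = Y e

/-- Composition of sign vectors. -/
def comp {E : Type*} (X Y : SignVec E) : SignVec E := fun e => if X e = 0 then Y e else X e

end SignVec

/-- The covector axioms for an oriented matroid given by its set of covectors. -/
structure IsOrientedMatroid {E : Type*} (L : Set (SignVec E)) : Prop where
  zero_mem : (0 : SignVec E) ∈ L
  neg_mem : ∀ X ∈ L, (-X) ∈ L
  comp_mem : ∀ X ∈ L, ∀ Y ∈ L, SignVec.comp X Y ∈ L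
  elim : ∀ X ∈ L, ∀ Y ∈ L, ∀ e, X e = -Y e → X e ≠ 0 →
    ∃ Z ∈ L, Z e = 0 ∧ ∀ f, ¬(X f = -Y f ∧ X f ≠ 0) → Z f = SignVec.comp X Y f

/-- The set of topes (maximal covectors) of `L`. -/
def Topes {E : Type*} (L : Set (SignVec E)) : Set (SignVec E) :=
  {T | T ∈ L ∧ ∀ X ∈ L, SignVec.le T X → X = T}

/-- `L` has no loops: every tope is nowhere zero. -/
def Loopless {E : Type*} (L : Set (SignVec E)) : Prop :=
  ∀ T ∈ Topes L, ∀ e, T e ≠ 0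

/-- The separator of two (co)vectors. -/
def sep {E : Type*} (P Q : SignVec E) : Set E := {e | P e = -Q e ∧ P e ≠ 0}

/-- The star of a covector: all topes above it. -/
def star {E : Type*} (L : Set (SignVec E)) (X : SignVec E) : Set (SignVec E) :=
  {T ∈ Topes L | SignVec.le X T}

/-- The closed interval `[Q,P]_R` in the tope poset with base tope `R`. -/
def intervalR {E : Type*} (L : Set (SignVec E)) (R Q P : SignVec E) : Set (SignVec E) :=
  {T ∈ Topes L | sep R Q ⊆ sep R T ∧ sep R T ⊆ sep R P}

/-- The open interval `(0̂, P)_{R,e}` in `T_{R,e}`. -/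
def openInt {E : Type*} (L : Set (SignVec E)) (R : SignVec E) (e : E) (P : SignVec E) :
    Set (SignVec E) :=
  {Q ∈ Topes L | Q e = -R e ∧ sep R Q ⊂ sep R P}

/-- The subposet `(0̂,P)^△_{R,e}` of `(0̂,P)_{R,e}`. -/
def openIntTri {E : Type*} (L : Set (SignVec E)) (R : SignVec E) (e : E) (P : SignVec E) :
    Set (SignVec E) :=
  {Q ∈ openInt L R e P | ∃ X ∈ L, intervalR L R Q P = star L X}

/-- Ordering a set of topes by `P ⪯_R Q ↔ Sep(R,P) ⊆ Sep(R,Q)`. -/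
def sepPreorder {E : Type*} (R : SignVec E) (S : Set (SignVec E)) : Preorder S where
  le P Q := sep R P.1 ⊆ sep R Q.1
  lt P Q := sep R P.1 ⊆ sep R Q.1 ∧ ¬ sep R Q.1 ⊆ sep R P.1
  le_refl _ := subset_rfl
  le_trans _ _ _ h₁ h₂ := fun _ hx => h₂ (h₁ hx)
  lt_iff_le_not_ge _ _ := Iff.rfl

/-- Ordering a set of covectors by the componentwise order on sign vectors. -/
def covPreorder {E : Type*} (S : Set (SignVec E)) : Preorder S where
  le X Y := SignVec.le X.1 Y.1
  lt X Y := SignVec.le X.1 Y.1 ∧ ¬ SignVec.le Y.1 X.1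
  le_refl _ := fun _ => Or.inr rfl
  le_trans X Y Z h₁ h₂ := fun e => by
    rcases h₁ e with h | h
    · exact Or.inl h
    · rcases h₂ e with h' | h'
      · exact Or.inl (h.trans h')
      · exact Or.inr (h.trans h')
  lt_iff_le_not_ge _ _ := Iff.rfl

open CategoryTheory in
/-- The geometric realization of the order complex of a poset, realized as the topological
realization of the nerve of the poset viewed as a category. -/
noncomputable def posetRealization (α : Type) [Preorder α] : TopCat :=
  SSet.toTop.obj (nerve α)

/-- The monomial `∏_{e ∈ Sep(P,Q)} U_e`, the `(P,Q)` entry of the Varchenko matrix. -/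
noncomputable def vchEntry {E : Type*} [Fintype E] (K : Type*) [Field K] (P Q : SignVec E) :
    MvPolynomial E K :=
  ∏ e ∈ Finset.univ.filter fun e => P e = -Q e ∧ P e ≠ 0, MvPolynomial.X e

/-- The Varchenko matrix of `L`, with rows and columns indexed by the topes of `L`. -/
noncomputable def varchenko {E : Type*} [Fintype E] (K : Type*) [Field K]
    (L : Set (SignVec E)) : Matrix ↥(Topes L) ↥(Topes L) (MvPolynomial E K) :=
  Matrix.of fun P Q => vchEntry K P.1 Q.1

/-- `a(F) = ∏_{e : F_e = 0} U_e`. -/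
noncomputable def aF {E : Type*} [Fintype E] (K : Type*) [Field K] (F : SignVec E) :
    MvPolynomial E K :=
  ∏ e ∈ Finset.univ.filter fun e => F e = 0, MvPolynomial.X e

/-- `T^{F,e}`: the topes `P` such that `F` is the greatest covector `G ∈ L` with
`G ≤ P` and `G e = 0`. -/
def TFe {E : Type*} (L : Set (SignVec E)) (F : SignVec E) (e : E) : Set (SignVec E) :=
  {P ∈ Topes L | F ∈ L ∧ SignVec.le F P ∧ F e = 0 ∧
    ∀ G ∈ L, SignVec.le G P → G e = 0 → SignVec.le G F}

/-- The poset `W_{R,e}(P)`. -/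
def Wset {E : Type*} (L : Set (SignVec E)) (R : SignVec E) (e : E) (P : SignVec E) :
    Set (SignVec E) :=
  {F ∈ L | F ≠ 0 ∧ SignVec.le F P ∧ F ≠ P ∧ F e = -R e ∧
    (∀ f, f ∉ sep P R → F f = P f) ∧ ∀ f ∈ sep P R, f ≠ e → F f = 0 ∨ F f = P f}

open scoped Classical in
/-- `μ` is, for every base tope `B` of `L`, the Möbius function `μ(0̂, ·)` of the poset
`T_{B,e}` (computed in its incidence algebra over `ℤ`): it satisfies the defining
recursion `∑_{0̂ ≤ z ≤ Q} μ(0̂,z) = 0` for every `Q > 0̂`, where `μ(0̂,0̂) = 1`. -/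
def IsMoebius {E : Type*} [Fintype E] (L : Set (SignVec E)) (e : E)
    (μ : SignVec E → SignVec E → ℤ) : Prop :=
  ∀ B ∈ Topes L, ∀ Q ∈ Topes L, Q e = -B e →
    1 + ∑ Q' ∈ Finset.univ.filter
      (fun Q' : SignVec E => Q' ∈ Topes L ∧ Q' e = -B e ∧ sep B Q' ⊆ sep B Q), μ Q' B = 0

/-- `L` is graded of rank `r`: every maximal chain of covectors (necessarily running from
the zero covector to a tope) has length `r`, i.e. `r+1` elements. -/
def GradedOfRank {α : Type*} (L : Set (SignVec α)) (r : ℕ) : Prop :=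
  ∀ c : Finset (SignVec α), ↑c ⊆ L → IsChain SignVec.le (c : Set (SignVec α)) →
    (0 : SignVec α) ∈ c → (∃ T ∈ c, T ∈ Topes L) →
    (∀ d : Finset (SignVec α), ↑d ⊆ L → IsChain SignVec.le (d : Set (SignVec α)) →
      c ⊆ d → c = d) →
    c.card = r + 1

/-- The restriction `L|_A` of `L` to a subset `A` of the ground set. -/
def restrictOM {E : Type*} (L : Set (SignVec E)) (A : Set E) : Set (SignVec ↥A) :=
  (fun X (a : ↥A) => X a.1) '' L

/-- `e` is the maximal element of `Sep(P,Q)`. -/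
def maxSep {E : Type*} [LinearOrder E] (e : E) (P Q : SignVec E) : Prop :=
  e ∈ sep P Q ∧ ∀ f ∈ sep P Q, f ≤ e

open scoped Classical in
/-- The `(Q,R)` entry of the matrix `𝓜^e`. -/
noncomputable def mEntry {E : Type*} [Fintype E] [LinearOrder E] (K : Type*) [Field K]
    (μ : SignVec E → SignVec E → ℤ) (e : E) (Q R : SignVec E) : MvPolynomial E K :=
  if Q = R then 1
  else if Q e = -1 ∧ R e = 1 ∧ maxSep e Q R then
    ((-μ Q R : ℤ) : MvPolynomial E K) * vchEntry K Q R
  else if Q e = 1 ∧ R e = -1 ∧ maxSep e Q R then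
    ((-μ (-Q) (-R) : ℤ) : MvPolynomial E K) * vchEntry K Q R
  else 0

namespace SignVec

variable {E : Type*} {X Y Z : SignVec E}

lemma le.refl (X : SignVec E) : le X X := fun _ => Or.inr rfl

lemma le.trans (hXY : le X Y) (hYZ : le Y Z) : le X Z := fun f =>
  (hXY f).elim Or.inl fun h => (hYZ f).imp h.trans h.trans

lemma le.apply_eq (h : le X Y) {f : E} (hf : X f ≠ 0) : X f = Y f := (h f).resolve_left hf

lemma le.support_subset (h : le X Y) : Function.support X ⊆ Function.support Y :=
  fun x (hf : X x ≠ 0) => show Y x ≠ 0 from h.apply_eq hf ▸ hf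

lemma le.eq_of_support_subset (h : le X Y) (hYX : Function.support Y ⊆ Function.support X) :
    X = Y := by
  funext f
  by_cases hf : X f = 0
  · by_contra hne
    exact hYX (fun hYf => hne (hf.trans hYf.symm)) hf
  · exact h.apply_eq hf

lemma le_comp (X Y : SignVec E) : le X (comp X Y) := fun f => by
  by_cases hf : X f = 0
  · exact Or.inl hf
  · exact Or.inr (if_neg hf).symm

end SignVec

open SignVec

section Separator

variable {E : Type*}

lemma sep_comm (P Q : SignVec E) : sep P Q = sep Q P := by
  ext f
  simp only [sep, Set.mem_ofPred_eq]
  generalize P f = p, Q f = q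
  revert p q
  decide

lemma not_mem_sep_of_apply_eq {P Q : SignVec E} {f : E} (h : P f = Q f) : f ∉ sep P Q := by
  simp only [sep, Set.mem_ofPred_eq, h]
  generalize Q f = q
  revert q
  decide

lemma sep_self (P : SignVec E) : sep P P = ∅ :=
  Set.eq_empty_of_forall_notMem fun _ => not_mem_sep_of_apply_eq rfl

lemma apply_eq_zero_of_le_of_mem_sep {X C P : SignVec E} (hXC : le X C) (hXP : le X P) {f : E}
    (hf : f ∈ sep C P) : X f = 0 := by
  have signs : ∀ x c p : SignType, (x = 0 ∨ x = c) → (x = 0 ∨ x = p) → c = -p ∧ c ≠ 0 →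
      x = 0 := by
    decide
  exact signs _ _ _ (hXC f) (hXP f) hf

lemma sep_subset_sep_of_between {R C T P : SignVec E} (hR : ∀ f, R f ≠ 0)
    (hC : ∀ f, C f ≠ 0) (hCT : sep R C ⊆ sep R T) (hTP : sep R T ⊆ sep R P) :
    sep T P ⊆ sep C P := fun f hf => by
  have signs : ∀ r c t p : SignType, r ≠ 0 → c ≠ 0 →
      (r = -c ∧ r ≠ 0 → r = -t ∧ r ≠ 0) → (r = -t ∧ r ≠ 0 → r = -p ∧ r ≠ 0) →
      t = -p ∧ t ≠ 0 → c = -p ∧ c ≠ 0 := by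
    decide
  exact signs _ _ _ _ (hR f) (hC f) (@hCT f) (@hTP f) hf

lemma sep_subset_sep_of_sep_subset {R C P : SignVec E} (hR : ∀ f, R f ≠ 0)
    (hCP : sep R C ⊆ sep R P) : sep C P ⊆ sep R P :=
  sep_subset_sep_of_between hR hR (by simp [sep_self]) hCP

end Separator

section Covectors

variable {E : Type*} {L : Set (SignVec E)}

lemma exists_tope_ge [Finite E] {X : SignVec E} (hX : X ∈ L) : ∃ T ∈ Topes L, le X T := by
  obtain ⟨T, ⟨hTL, hXT⟩, hmax⟩ := (Set.toFinite {Y | Y ∈ L ∧ le X Y}).exists_maximalFor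
    Function.support _ ⟨X, hX, le.refl X⟩
  refine ⟨T, ⟨hTL, fun Z hZ hTZ => ?_⟩, hXT⟩
  exact (hTZ.eq_of_support_subset (hmax ⟨hZ, hXT.trans hTZ⟩ hTZ.support_subset)).symm

/-- The witness is any tope above `X ∘ (-Y)`. -/
lemma exists_tope_ge_of_apply_eq_zero [Finite E] (hOM : IsOrientedMatroid L) {X Y : SignVec E}
    (hX : X ∈ L) (hY : Y ∈ L) {f : E} (hXf : X f = 0) (hYf : Y f ≠ 0) :
    ∃ T ∈ Topes L, le X T ∧ T f = -Y f := by
  obtain ⟨T, hT, hXYT⟩ := exists_tope_ge (hOM.comp_mem X hX _ (hOM.neg_mem Y hY))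
  have hcomp : comp X (-Y) f = -Y f := if_pos hXf
  refine ⟨T, hT, (le_comp X (-Y)).trans hXYT, ?_⟩
  rw [← hcomp]
  exact (hXYT.apply_eq (by simpa [hcomp] using hYf)).symm

end Covectors

section StarInterval

variable {E : Type*} {L : Set (SignVec E)} {R C P X : SignVec E}

lemma le_right_of_intervalR_eq_star (hP : P ∈ Topes L) (hCP : sep R C ⊆ sep R P)
    (hstar : intervalR L R C P = star L X) : le X P :=
  (hstar ▸ ⟨hP, hCP, subset_rfl⟩ : P ∈ star L X).2

lemma le_left_of_intervalR_eq_star (hC : C ∈ Topes L) (hCP : sep R C ⊆ sep R P)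
    (hstar : intervalR L R C P = star L X) : le X C :=
  (hstar ▸ ⟨hC, subset_rfl, hCP⟩ : C ∈ star L X).2

lemma apply_eq_zero_iff_mem_sep_of_intervalR_eq_star [Finite E] (hOM : IsOrientedMatroid L)
    (hloop : Loopless L) (hR : R ∈ Topes L) (hP : P ∈ Topes L) (hC : C ∈ Topes L)
    (hCP : sep R C ⊆ sep R P) (hX : X ∈ L) (hstar : intervalR L R C P = star L X) (f : E) :
    X f = 0 ↔ f ∈ sep C P := by
  constructor
  · intro hXf
    obtain ⟨T, hT, hXT, hTf⟩ := exists_tope_ge_of_apply_eq_zero hOM hX hP.1 hXf (hloop P hP f)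
    have hTint : T ∈ intervalR L R C P := hstar ▸ ⟨hT, hXT⟩
    exact sep_subset_sep_of_between (hloop R hR) (hloop C hC) hTint.2.1 hTint.2.2
      ⟨hTf, hloop T hT f⟩
  · exact apply_eq_zero_of_le_of_mem_sep (le_left_of_intervalR_eq_star hC hCP hstar)
      (le_right_of_intervalR_eq_star hP hCP hstar)

lemma mem_Wset_of_intervalR_eq_star [Finite E] (hOM : IsOrientedMatroid L) (hloop : Loopless L)
    {e : E} (hR : R ∈ Topes L) (hP : P ∈ Topes L) (hPe : P e = -R e) (hC : C ∈ Topes L)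
    (hCe : C e = -R e) (hCP : sep R C ⊂ sep R P) (hX : X ∈ L)
    (hstar : intervalR L R C P = star L X) : X ∈ Wset L R e P := by
  have hzero := apply_eq_zero_iff_mem_sep_of_intervalR_eq_star hOM hloop hR hP hC hCP.subset hX
    hstar
  have hXP := le_right_of_intervalR_eq_star hP hCP.subset hstar
  have hXe : X e ≠ 0 := fun h => not_mem_sep_of_apply_eq (hCe.trans hPe.symm) ((hzero e).1 h)
  refine ⟨hX, fun h => hXe (congrFun h e), hXP, fun h => ?_, (hXP.apply_eq hXe).trans hPe,
    fun f hf => hXP.apply_eq fun h => ?_, fun f _ _ => hXP f⟩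
  · have hCeqP : C = P := hP.2 C hC.1 (h ▸ le_left_of_intervalR_eq_star hC hCP.subset hstar)
    exact hCP.ne (congrArg (sep R) hCeqP)
  · exact hf (sep_comm R P ▸ sep_subset_sep_of_sep_subset (hloop R hR) hCP.subset ((hzero f).1 h))

lemma le_of_intervalR_eq_star_of_sep_subset [Finite E] (hOM : IsOrientedMatroid L)
    (hloop : Loopless L) {C' X' : SignVec E} (hR : R ∈ Topes L) (hP : P ∈ Topes L)
    (hC : C ∈ Topes L) (hC' : C' ∈ Topes L) (hC'P : sep R C' ⊆ sep R P) (hX : X ∈ L) (hX' : X' ∈ L)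
    (hstar : intervalR L R C P = star L X) (hstar' : intervalR L R C' P = star L X')
    (hCC' : sep R C ⊆ sep R C') : le X X' := by
  have hCP := hCC'.trans hC'P
  refine fun f => (em (X f = 0)).imp id fun hXf => ?_
  have hX'f : X' f ≠ 0 := fun h => hXf <|
    (apply_eq_zero_iff_mem_sep_of_intervalR_eq_star hOM hloop hR hP hC hCP hX hstar f).2 <|
      sep_subset_sep_of_between (hloop R hR) (hloop C hC) hCC' hC'P <|
        (apply_eq_zero_iff_mem_sep_of_intervalR_eq_star hOM hloop hR hP hC' hC'P hX' hstar' f).1 h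
  rw [(le_right_of_intervalR_eq_star hP hCP hstar).apply_eq hXf,
    (le_right_of_intervalR_eq_star hP hC'P hstar').apply_eq hX'f]

end StarInterval

/-- Lemma 3.1 (i) and (ii). -/
theorem alpha_mem_W_and_monotone {E : Type*} [Fintype E] (L : Set (SignVec E))
    (hOM : IsOrientedMatroid L) (hloop : Loopless L)
    (R P C X : SignVec E) (e : E) (hR : R ∈ Topes L) (hP : P ∈ Topes L) (hPe : P e = -R e)
    (hC : C ∈ Topes L) (hCe : C e = -R e) (hCP : sep R C ⊂ sep R P)
    (hX : X ∈ L) (hstar : intervalR L R C P = star L X) :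
    ({f | X f = 0} = sep C P ∧ X ∈ Wset L R e P) ∧
    ∀ C' X' : SignVec E, C' ∈ Topes L → C' e = -R e → sep R C' ⊂ sep R P → X' ∈ L →
      intervalR L R C' P = star L X' → sep R C ⊆ sep R C' → SignVec.le X X' := by
  refine ⟨⟨Set.ext (apply_eq_zero_iff_mem_sep_of_intervalR_eq_star hOM hloop hR hP hC hCP.subset
    hX hstar), mem_Wset_of_intervalR_eq_star hOM hloop hR hP hPe hC hCe hCP hX hstar⟩, ?_⟩
  intro C' X' hC' _ hC'P hX' hstar' hCC'
  exact le_of_intervalR_eq_star_of_sep_subset hOM hloop hR hP hC hC' hC'P.subset hX hX' hstar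
    hstar' hCC'
end

section
/- Let L be the covector set of an oriented matroid without loops on a finite linearly ordered set E, and let e ∈ E. Let F,F' ∈ L with F_e = F'_e = 0, and let R ∈ T^{F,e} and Q ∈ T^{F',e} with Q ≠ R. If the entry 𝓜^e_{Q,R} is nonzero, then F ≤ F' in the componentwise order on covectors. Consequently, every off-diagonal entry of 𝓜^e indexed by topes from blocks T^{F,e}, T^{F',e} with F ≰ F' vanishes, so that 𝓜^e is block lower triangular with diagonal blocks M^{F,e} with respect to any ordering of T that lists the blocks T^{F,e} consecutively, compatibly with a linear extension of the componentwise order on {F ∈ L : F_e = 0}. -/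
open Finset

/-!
If `R ∈ T^{F,e}` and `Q ≠ R`, then `𝓜^e_{Q,R}` is a multiple of `μ(0̂,Q)` in `T_{R,e}` or of
`μ(0̂,-Q)` in `T_{-R,e}`. Composition with `F` sends a tope `P` to the tope `F ∘ P` with
`Sep(R, F ∘ P) = Sep(R,P) ∩ z(F)`, where `z(F)` is the zero set of `F`; comparing the Möbius
recursions at `P` and at `F ∘ P` shows, by induction on `Sep(R,P)`, that `μ(0̂,P) = 0` unless
`Sep(R,P) ⊆ z(F)`. Hence a nonzero entry forces `Sep(R,Q) ⊆ z(F)`, i.e. `F ≤ Q`, and the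
maximality of `F'` among the covectors below `Q` vanishing at `e` gives `F ≤ F'`.
-/

theorem SignType.eq_neg_iff_ne {x y : SignType} (hx : x ≠ 0) (hy : y ≠ 0) :
    x = -y ↔ x ≠ y := by
  decide +revert

namespace SignVec

variable {E : Type*}

theorem le.neg {X Y : SignVec E} (h : le X Y) : le (-X) (-Y) := fun f =>
  (h f).imp (fun h0 => by simp [h0]) (fun h1 => by simp [h1])

end SignVec

open SignVec

section Separators

variable {E : Type*}

theorem sep_neg_neg (P Q : SignVec E) : sep (-P) (-Q) = sep P Q := by
  ext f
  simp [sep, neg_eq_iff_eq_neg]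

theorem mem_sep_iff_ne {P Q : SignVec E} {f : E} (hP : P f ≠ 0) (hQ : Q f ≠ 0) :
    f ∈ sep P Q ↔ P f ≠ Q f :=
  (and_iff_left hP).trans (SignType.eq_neg_iff_ne hP hQ)

theorem eq_of_sep_eq {R Q Q' : SignVec E} (hR : ∀ f, R f ≠ 0) (hQ : ∀ f, Q f ≠ 0)
    (hQ' : ∀ f, Q' f ≠ 0) (h : sep R Q = sep R Q') : Q = Q' := by
  funext f
  have hf := Set.ext_iff.mp h f
  rw [mem_sep_iff_ne (hR f) (hQ f), mem_sep_iff_ne (hR f) (hQ' f)] at hf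
  rcases eq_or_ne (R f) (Q f) with hRQ | hRQ
  · exact hRQ.symm.trans (not_ne_iff.mp fun hRQ' => hf.mpr hRQ' hRQ)
  · have hQR := (SignType.eq_neg_iff_ne (hR f) (hQ f)).mpr hRQ
    have hQ'R := (SignType.eq_neg_iff_ne (hR f) (hQ' f)).mpr (hf.mp hRQ)
    exact neg_injective (hQR.symm.trans hQ'R)

theorem sep_comp_of_le {F R : SignVec E} (Q : SignVec E) (hFR : le F R) :
    sep R (comp F Q) = sep R Q ∩ {f | F f = 0} := by
  ext f
  by_cases h : F f = 0
  · simp [sep, comp, h]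
  · have hRf : R f = F f := ((hFR f).resolve_left h).symm
    simp [sep, comp, h, hRf]

theorem le_of_sep_subset {F R Q : SignVec E} (hFR : le F R) (hQ : ∀ f, Q f ≠ 0)
    (h : sep R Q ⊆ {f | F f = 0}) : le F Q := by
  intro f
  by_cases h0 : F f = 0
  · exact Or.inl h0
  have hRf : F f = R f := (hFR f).resolve_left h0
  by_cases hRQ : R f = Q f
  · exact Or.inr (hRf.trans hRQ)
  · exact absurd (h ((mem_sep_iff_ne (hRf ▸ h0) (hQ f)).mpr hRQ)) h0

end Separators

section Topes

variable {E : Type*} {L : Set (SignVec E)}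

theorem mem_topes_of_forall_ne_zero {X : SignVec E} (hX : X ∈ L) (h : ∀ f, X f ≠ 0) :
    X ∈ Topes L :=
  ⟨hX, fun _ _ hle => funext fun f => ((hle f).resolve_left (h f)).symm⟩

theorem IsOrientedMatroid.neg_mem_topes (hOM : IsOrientedMatroid L) {T : SignVec E}
    (hT : T ∈ Topes L) : -T ∈ Topes L := by
  refine ⟨hOM.neg_mem T hT.1, fun X hX hle => ?_⟩
  have hle' : le T (-X) := by simpa using hle.neg
  rw [← hT.2 (-X) (hOM.neg_mem X hX) hle', neg_neg]

theorem IsOrientedMatroid.comp_mem_topes (hOM : IsOrientedMatroid L) (hloop : Loopless L)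
    {F Q : SignVec E} (hF : F ∈ L) (hQ : Q ∈ Topes L) : comp F Q ∈ Topes L :=
  mem_topes_of_forall_ne_zero (hOM.comp_mem F hF Q hQ.1) fun f => by
    unfold comp
    split_ifs with h
    exacts [hloop Q hQ f, h]

end Topes

section Moebius

open scoped Classical

variable {E : Type*} [Fintype E] {L : Set (SignVec E)} {e : E} {μ : SignVec E → SignVec E → ℤ}

theorem IsMoebius.eq_zero_of_not_sep_subset (hμ : IsMoebius L e μ) (hOM : IsOrientedMatroid L)
    (hloop : Loopless L) {F R : SignVec E} (hF : F ∈ L) (hR : R ∈ Topes L) (hFR : le F R)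
    (hFe : F e = 0) {Q : SignVec E} (hQ : Q ∈ Topes L) (hQe : Q e = -R e)
    (hQF : ¬ sep R Q ⊆ {f | F f = 0}) : μ Q R = 0 := by
  induction Q using (InvImage.wf (sep R) wellFounded_lt).induction with
  | _ Q ih =>
  set S := univ.filter fun P : SignVec E => P ∈ Topes L ∧ P e = -R e ∧ sep R P ⊆ sep R Q
  have hsplit := sum_filter_add_sum_filter_not S (fun P => sep R P ⊆ {f | F f = 0}) (μ · R)
  have hlow : S.filter (fun P => sep R P ⊆ {f | F f = 0}) = univ.filter fun P : SignVec E =>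
      P ∈ Topes L ∧ P e = -R e ∧ sep R P ⊆ sep R (comp F Q) := by
    ext P
    simp [S, sep_comp_of_le Q hFR, Set.subset_inter_iff, and_assoc]
  have hhigh : ∑ P ∈ S.filter (fun P => ¬ sep R P ⊆ {f | F f = 0}), μ P R = μ Q R := by
    refine sum_eq_single_of_mem Q (by simp [S, hQ, hQe, hQF]) fun P hP hPQ => ?_
    simp only [S, mem_filter, mem_univ, true_and] at hP
    obtain ⟨⟨hPT, hPe, hPQsub⟩, hPF⟩ := hP
    refine ih P (hPQsub.ssubset_of_ne fun h => hPQ ?_) hPT hPe hPF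
    exact eq_of_sep_eq (hloop R hR) (hloop P hPT) (hloop Q hQ) h
  have hrecQ := hμ R hR Q hQ hQe
  have hrecFQ := hμ R hR (comp F Q) (hOM.comp_mem_topes hloop hF hQ) (by simp [comp, hFe, hQe])
  rw [← hlow] at hrecFQ
  linarith

end Moebius

section MMatrix

variable {E : Type*} [Fintype E] [LinearOrder E] {K : Type*} [Field K]
  {μ : SignVec E → SignVec E → ℤ} {e : E}

theorem mEntry_ne_zero {Q R : SignVec E} (hQR : Q ≠ R) (h : mEntry K μ e Q R ≠ 0) :
    Q e = -R e ∧ (μ Q R ≠ 0 ∨ μ (-Q) (-R) ≠ 0) := by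
  unfold mEntry at h
  split_ifs at h with hQR' hneg hpos
  · exact absurd hQR' hQR
  · exact ⟨by rw [hneg.1, hneg.2.1], Or.inl fun h0 => h (by simp [h0])⟩
  · exact ⟨by rw [hpos.1, hpos.2.1, neg_neg], Or.inr fun h0 => h (by simp [h0])⟩
  · exact absurd rfl h

theorem sep_subset_of_mEntry_ne_zero {L : Set (SignVec E)} (hOM : IsOrientedMatroid L)
    (hloop : Loopless L) (hμ : IsMoebius L e μ) {F R Q : SignVec E} (hF : F ∈ L)
    (hR : R ∈ Topes L) (hFR : le F R) (hFe : F e = 0) (hQ : Q ∈ Topes L) (hQR : Q ≠ R)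
    (h : mEntry K μ e Q R ≠ 0) : sep R Q ⊆ {f | F f = 0} := by
  obtain ⟨hQe, hμQ | hμQ⟩ := mEntry_ne_zero hQR h
  · by_contra hQF
    exact hμQ (hμ.eq_zero_of_not_sep_subset hOM hloop hF hR hFR hFe hQ hQe hQF)
  · by_contra hQF
    refine hμQ (hμ.eq_zero_of_not_sep_subset hOM hloop (hOM.neg_mem F hF)
      (hOM.neg_mem_topes hR) hFR.neg (by simp [hFe]) (hOM.neg_mem_topes hQ) (by simp [hQe]) ?_)
    simpa [sep_neg_neg, SignType.neg_eq_zero_iff] using hQF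

end MMatrix

open scoped Classical in
theorem mMatrix_block_triangular_general {E : Type*} [Fintype E] [LinearOrder E]
    (K : Type*) [Field K] (L : Set (SignVec E))
    (hOM : IsOrientedMatroid L) (hloop : Loopless L)
    (e : E) (μ : SignVec E → SignVec E → ℤ) (hμ : IsMoebius L e μ)
    (F F' : SignVec E)
    (R Q : SignVec E) (hR : R ∈ TFe L F e) (hQ : Q ∈ TFe L F' e) (hQR : Q ≠ R) :
    ((mEntry K μ e Q R : MvPolynomial E K) ≠ 0 → SignVec.le F F') ∧
    (¬ SignVec.le F F' → (mEntry K μ e Q R : MvPolynomial E K) = 0) := by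
  obtain ⟨hRT, hF, hFR, hFe, -⟩ := hR
  obtain ⟨hQT, -, -, -, hF'max⟩ := hQ
  have hle : mEntry K μ e Q R ≠ 0 → le F F' := fun h =>
    hF'max F hF (le_of_sep_subset hFR (hloop Q hQT)
      (sep_subset_of_mEntry_ne_zero hOM hloop hμ hF hRT hFR hFe hQT hQR h)) hFe
  exact ⟨hle, not_imp_comm.mp hle⟩

open scoped Classical in
/-- Lemma 5.7: block triangularity of `𝓜^e`. -/
theorem mMatrix_block_triangular {E : Type*} [Fintype E] [LinearOrder E]
    (K : Type*) [Field K] (L : Set (SignVec E))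
    (hOM : IsOrientedMatroid L) (hloop : Loopless L)
    (e : E) (μ : SignVec E → SignVec E → ℤ) (hμ : IsMoebius L e μ)
    (F F' : SignVec E) (hF : F ∈ L) (hF' : F' ∈ L) (hFe : F e = 0) (hF'e : F' e = 0)
    (R Q : SignVec E) (hR : R ∈ TFe L F e) (hQ : Q ∈ TFe L F' e) (hQR : Q ≠ R) :
    ((mEntry K μ e Q R : MvPolynomial E K) ≠ 0 → SignVec.le F F') ∧
    (¬ SignVec.le F F' → (mEntry K μ e Q R : MvPolynomial E K) = 0) :=
  mMatrix_block_triangular_general K L hOM hloop e μ hμ F F' R Q hR hQ hQR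
end
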